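/- arXiv:math/0507565 — 2 statements merged into one kernel-verified Lean document; each statement's English description precedes it below -/
import Mathlib

section
/- Let Γ be an almost USLI complex with Stanley-Reisner ideal I_Γ having minimal generators m_1 >_lex ⋯ >_lex m_l >_lex m_{l+1}. Then the number of facets of Γ is strictly greater than deg(m_{l+1}), the regularity of I_Γ. -/
/-- A simplicial complex on a subset of ℕ: a collection of finite sets closed under inclusion. -/
def IsComplex (Γ : Finset (Finset ℕ)) : Prop :=
  ∀ F ∈ Γ, ∀ G ⊆ F, G ∈ Γ

/-- Γ is shifted on vertex set [n]: replacing a vertex by a larger one stays in Γ. -/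
def IsShifted (Γ : Finset (Finset ℕ)) (n : ℕ) : Prop :=
  ∀ F ∈ Γ, ∀ i ∈ F, ∀ j, i < j → j ≤ n → insert j (F.erase i) ∈ Γ

/-- The facets (maximal faces) of Γ. -/
def facets (Γ : Finset (Finset ℕ)) : Finset (Finset ℕ) :=
  Γ.filter fun F => ∀ G ∈ Γ, F ⊆ G → F = G

/-- The antistar of a vertex. -/
def ast (Γ : Finset (Finset ℕ)) (v : ℕ) : Finset (Finset ℕ) :=
  Γ.filter fun F => v ∉ F

/-- The link of a vertex. -/
def lk (Γ : Finset (Finset ℕ)) (v : ℕ) : Finset (Finset ℕ) :=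
  Γ.filter fun F => v ∉ F ∧ insert v F ∈ Γ

/-- The cone over Γ with apex v. -/
def cone (Γ : Finset (Finset ℕ)) (v : ℕ) : Finset (Finset ℕ) :=
  Γ ∪ Γ.image (insert v)


/-- Monomials in the variables x_i (i ≥ 1) are modelled as multisets of variable indices;
`m ≤ m'` (multiset inclusion) is divisibility.  `monLexGT m m'` says m >_lex m' in the
lexicographic order on monomials of S (smaller variable indices are lex-larger). -/
def monLexGT (m m' : Multiset ℕ) : Prop :=
  List.Lex (· < ·) (m.sort (· ≤ ·)) (m'.sort (· ≤ ·))

/-- m >_grlex m' in the graded lexicographic order (lower degree monomials are larger). -/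
def gradedLexGT (m m' : Multiset ℕ) : Prop :=
  Multiset.card m < Multiset.card m' ∨
    (Multiset.card m = Multiset.card m' ∧ monLexGT m m')

/-- A set of monomials forms a monomial ideal iff it is upward closed under divisibility. -/
def IsMonIdeal (I : Set (Multiset ℕ)) : Prop :=
  ∀ m ∈ I, ∀ m' : Multiset ℕ, m ≤ m' → m' ∈ I

/-- The minimal generators of a monomial ideal: monomials of I not properly divisible by
a monomial of I. -/
def minGen (I : Set (Multiset ℕ)) : Set (Multiset ℕ) :=
  {m ∈ I | ∀ m' ∈ I, m' ≤ m → m' = m}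

/-- The monomial ideal generated by a set of monomials. -/
def idealGen (G : Set (Multiset ℕ)) : Set (Multiset ℕ) :=
  {m | ∃ g ∈ G, g ≤ m}

/-- A universal squarefree lexsegment ideal (USLI): a squarefree monomial ideal of
S = k[x_i : i ∈ ℕ], finitely generated in each degree, such that together with any
monomial it contains every lex-larger squarefree monomial of the same degree. -/
def IsUSLI (L : Set (Multiset ℕ)) : Prop :=
  IsMonIdeal L ∧
  (∀ m ∈ minGen L, m.Nodup ∧ ∀ x ∈ m, 1 ≤ x) ∧
  (∀ d : ℕ, {m ∈ minGen L | Multiset.card m = d}.Finite) ∧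
  (∀ m ∈ L, ∀ m' : Multiset ℕ, m'.Nodup → (∀ x ∈ m', 1 ≤ x) →
    Multiset.card m' = Multiset.card m → monLexGT m' m → m' ∈ L)

/-- A squarefree strongly stable monomial ideal: all minimal generators are squarefree
(in positive variables), and exchanging a variable of a minimal generator for a smaller
missing one stays in the ideal. -/
def IsSqStable (I : Set (Multiset ℕ)) : Prop :=
  IsMonIdeal I ∧
  (∀ m ∈ minGen I, m.Nodup ∧ ∀ x ∈ m, 1 ≤ x) ∧
  (∀ m ∈ minGen I, ∀ i j : ℕ, 1 ≤ i → i < j → j ∈ m → i ∉ m →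
    (i ::ₘ m.erase j) ∈ I)

/-- The largest variable index dividing a monomial. -/
def maxVar (u : Multiset ℕ) : ℕ := u.toFinset.sup id

lemma exists_minGen_le' {I : Set (Multiset ℕ)} :
    ∀ (c : ℕ) (u : Multiset ℕ), Multiset.card u ≤ c → u ∈ I → ∃ g ∈ minGen I, g ≤ u := by
  intro c
  induction c with
  | zero =>
    intro u hc hu
    have hu0 : u = 0 := Multiset.card_eq_zero.mp (Nat.le_zero.mp hc)
    refine ⟨u, ⟨hu, fun m' _ hle => le_antisymm hle ?_⟩, le_rfl⟩
    rw [hu0]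
    exact Multiset.zero_le m'
  | succ c ih =>
    intro u hc hu
    by_cases h : ∀ m' ∈ I, m' ≤ u → m' = u
    · exact ⟨u, ⟨hu, h⟩, le_rfl⟩
    · push_neg at h
      obtain ⟨u', hu', hle, hne⟩ := h
      have hlt : Multiset.card u' < Multiset.card u := Multiset.card_lt_card (lt_of_le_of_ne hle hne)
      obtain ⟨g, hg, hgle⟩ := ih u' (by omega) hu'
      exact ⟨g, hg, hgle.trans hle⟩

lemma exists_minGen_le {I : Set (Multiset ℕ)} {u : Multiset ℕ} (hu : u ∈ I) :
    ∃ g ∈ minGen I, g ≤ u := exists_minGen_le' (Multiset.card u) u le_rfl hu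

lemma lex_decomp : ∀ {l1 l2 : List ℕ}, List.Lex (· < ·) l1 l2 → l1.length = l2.length →
    ∃ p a b t1 t2, l1 = p ++ a :: t1 ∧ l2 = p ++ b :: t2 ∧ a < b := by
  intro l1 l2 h
  induction h with
  | nil => intro h; simp at h
  | @cons a l1' l2' h ih =>
    intro hlen
    obtain ⟨p, x, y, t1, t2, h1, h2, hxy⟩ := ih (by simpa using hlen)
    exact ⟨a :: p, x, y, t1, t2, by simp [h1], by simp [h2], hxy⟩
  | @rel a l1' b l2' hab =>
    intro _
    exact ⟨[], a, b, l1', l2', rfl, rfl, hab⟩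

lemma exists_facet_superset {Γ : Finset (Finset ℕ)} {F : Finset ℕ} (hF : F ∈ Γ) :
    ∃ G ∈ facets Γ, F ⊆ G := by
  classical
  obtain ⟨G, hG, hmax⟩ := Finset.exists_max_image (Γ.filter fun G => F ⊆ G) Finset.card
    ⟨F, Finset.mem_filter.mpr ⟨hF, le_refl F⟩⟩
  rw [Finset.mem_filter] at hG
  refine ⟨G, ?_, hG.2⟩
  simp only [facets, Finset.mem_filter]
  refine ⟨hG.1, fun G' hG' hsub => ?_⟩
  exact Finset.eq_of_subset_of_card_le hsub (hmax G' (Finset.mem_filter.mpr ⟨hG', hG.2.trans hsub⟩))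
/-- if Γ is an almost USLI complex — its Stanley-Reisner ideal I has
graded-lex sorted minimal generators m_1 >_lex ⋯ >_lex m_l >_lex m_{l+1} such that I is
not a USLI but ⟨m_1,…,m_l⟩ is — then the number of facets of Γ is strictly greater than
deg(m_{l+1}), the regularity of I. -/
theorem almost_usli_facets_gt_reg (I : Set (Multiset ℕ))
    (gens : List (Multiset ℕ)) (l : ℕ) (hlen : gens.length = l + 1)
    (hchain : gens.Chain' gradedLexGT)
    (hgen : minGen I = {m | m ∈ gens})
    (hI : IsSqStable I)
    (hUSLIhead : IsUSLI (idealGen {m | m ∈ gens.take l}))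
    (hnotUSLI : ¬ IsUSLI I)
    (mlast : Multiset ℕ) (hml : gens.getLast? = some mlast)
    (n : ℕ) (hsupp : ∀ m ∈ gens, ∀ x ∈ m, x ≤ n)
    (Γ : Finset (Finset ℕ)) (hΓV : ∀ F ∈ Γ, F ⊆ Finset.Icc 1 n)
    (hΓL : ∀ F : Finset ℕ, F ⊆ Finset.Icc 1 n → (F ∈ Γ ↔ (F.val : Multiset ℕ) ∉ I)) :
    Multiset.card mlast < (facets Γ).card := by
  classical
  obtain ⟨hIdeal, hsq, hstab⟩ := hI
  -- decompose the generator list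
  have hne : gens ≠ [] := by
    intro h; rw [h] at hml; simp at hml
  have hlast : gens.getLast hne = mlast := by
    have h := List.getLast?_eq_getLast hne
    rw [hml] at h
    exact (Option.some_injective _ h.symm)
  have hdl : gens.dropLast = gens.take l := by
    rw [List.dropLast_eq_take, hlen]
    norm_num
  have hsplit : gens = gens.take l ++ [mlast] := by
    conv_lhs => rw [← List.dropLast_append_getLast hne]
    rw [hdl, hlast]
  have hmemg : mlast ∈ gens := by
    rw [hsplit]; exact List.mem_append_right _ (List.mem_singleton.mpr rfl)
  have hmingen : ∀ g, g ∈ minGen I ↔ g ∈ gens := fun g => by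
    rw [hgen]; exact Iff.rfl
  have hmm : mlast ∈ minGen I := (hmingen mlast).mpr hmemg
  have hmI : mlast ∈ I := hmm.1
  have hnodup : mlast.Nodup := (hsq _ hmm).1
  have hposm : ∀ x ∈ mlast, 1 ≤ x := (hsq _ hmm).2
  have hubm : ∀ x ∈ mlast, x ≤ n := hsupp _ hmemg
  set M : Finset ℕ := mlast.toFinset with hM
  have hMval : M.val = mlast := by
    rw [hM, Multiset.toFinset_val, Multiset.dedup_eq_self.mpr hnodup]
  have hMmem : ∀ x, x ∈ M ↔ x ∈ mlast := fun x => Multiset.mem_toFinset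
  have hMIcc : M ⊆ Finset.Icc 1 n := by
    intro x hx; rw [hMmem] at hx; exact Finset.mem_Icc.mpr ⟨hposm x hx, hubm x hx⟩
  have hfacΓ : ∀ F ∈ facets Γ, F ∈ Γ := by
    intro F hF
    simp only [facets, Finset.mem_filter] at hF
    exact hF.1
  -- downward closedness of Γ
  have hdown : ∀ F ∈ Γ, ∀ G ⊆ F, G ∈ Γ := by
    intro F hF G hG
    have hGicc : G ⊆ Finset.Icc 1 n := hG.trans (hΓV F hF)
    rw [hΓL G hGicc]
    intro hGI
    exact (hΓL F (hΓV F hF)).mp hF (hIdeal _ hGI _ (Finset.val_le_iff.mpr hG))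
  -- witness from not-USLI
  have hfin : ∀ d : ℕ, {m ∈ minGen I | Multiset.card m = d}.Finite := by
    intro e
    apply Set.Finite.subset gens.finite_toSet
    intro m hm
    exact (hmingen m).mp hm.1
  have hD : ¬ (∀ m ∈ I, ∀ m' : Multiset ℕ, m'.Nodup → (∀ x ∈ m', 1 ≤ x) →
      Multiset.card m' = Multiset.card m → monLexGT m' m → m' ∈ I) := by
    intro h4
    exact hnotUSLI ⟨hIdeal, hsq, hfin, h4⟩
  push_neg at hD
  obtain ⟨u, huI, w, hwnd, hwpos, hwcard, hwlex, hwnI⟩ := hD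
  obtain ⟨g0, hg0min, hg0le⟩ := exists_minGen_le huI
  have hg0gens : g0 ∈ gens := (hmingen g0).mp hg0min
  have hg0cases : g0 ∈ gens.take l ∨ g0 = mlast := by
    rw [hsplit] at hg0gens
    rcases List.mem_append.mp hg0gens with h | h
    · exact Or.inl h
    · exact Or.inr (List.mem_singleton.mp h)
  rcases hg0cases with hhead | hg0eq
  · exfalso
    have huLH : u ∈ idealGen {m | m ∈ gens.take l} := ⟨g0, hhead, hg0le⟩
    have hwLH := hUSLIhead.2.2.2 u huLH w hwnd hwpos hwcard hwlex
    obtain ⟨g, hg, hgw⟩ := hwLH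
    have hgI : g ∈ I := ((hmingen g).mpr (List.take_subset l gens hg)).1
    exact hwnI (hIdeal g hgI w hgw)
  · rw [hg0eq] at hg0le
    have hule : mlast ≤ u := hg0le
    -- pivot decomposition of the lex comparison
    have hlensort : (w.sort (· ≤ ·)).length = (u.sort (· ≤ ·)).length := by
      rw [Multiset.length_sort, Multiset.length_sort, hwcard]
    obtain ⟨p, a, b, t1, t2, hsw, hsu, hab⟩ := lex_decomp hwlex hlensort
    have hswnd : (w.sort (· ≤ ·)).Nodup := by
      have h : ((w.sort (· ≤ ·) : List ℕ) : Multiset ℕ) = w := Multiset.sort_eq _ _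
      rw [← Multiset.coe_nodup, h]
      exact hwnd
    have haw : a ∈ w := by
      rw [← Multiset.mem_sort (α := ℕ) (· ≤ ·), hsw]
      exact List.mem_append_right _ List.mem_cons_self
    have hposa : 1 ≤ a := hwpos a haw
    have ht2 : ∀ y ∈ t2, b ≤ y := by
      have hsub : (b :: t2).Sublist (u.sort (· ≤ ·)) := by
        rw [hsu]; exact List.sublist_append_right p (b :: t2)
      have hs : List.Pairwise (· ≤ ·) (b :: t2) :=
        List.Pairwise.sublist hsub (Multiset.pairwise_sort _ _)
      exact (List.pairwise_cons.mp hs).1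
    have hsmall : ∀ x ∈ u, x < b → x ∈ p := by
      intro x hxu hxb
      have hxsu : x ∈ u.sort (· ≤ ·) := (Multiset.mem_sort _).mpr hxu
      rw [hsu] at hxsu
      rcases List.mem_append.mp hxsu with h | h
      · exact h
      · rcases List.mem_cons.mp h with h | h
        · exact absurd (h ▸ hxb) (lt_irrefl b)
        · exact absurd hxb (not_lt.mpr (ht2 x h))
    have hpw : ∀ x ∈ p, x ∈ w := by
      intro x hx
      rw [← Multiset.mem_sort (α := ℕ) (· ≤ ·), hsw]
      exact List.mem_append_left _ hx
    have hanm : a ∉ mlast := by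
      intro ham
      have hau : a ∈ u := Multiset.mem_of_le hule ham
      have hap : a ∈ p := hsmall a hau hab
      rw [hsw] at hswnd
      rcases List.nodup_append'.mp hswnd with ⟨-, -, hdisj⟩
      exact hdisj hap List.mem_cons_self
    -- the face coming from the witness
    set H : Finset ℕ := w.toFinset.filter (· ≤ n) with hHdef
    have hHval : H.val ≤ w := by
      calc H.val ≤ w.toFinset.val := by
            rw [hHdef, Finset.filter_val]; exact Multiset.filter_le _ _
        _ ≤ w := by rw [Multiset.toFinset_val]; exact Multiset.dedup_le w
    have hHicc : H ⊆ Finset.Icc 1 n := by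
      intro x hx
      rw [hHdef, Finset.mem_filter] at hx
      exact Finset.mem_Icc.mpr ⟨hwpos x (Multiset.mem_toFinset.mp hx.1), hx.2⟩
    have hHΓ : H ∈ Γ := by
      rw [hΓL H hHicc]
      intro hHI
      exact hwnI (hIdeal _ hHI w hHval)
    have hwH : ∀ x ∈ w, x ≤ n → x ∈ H := by
      intro x hx hxn
      rw [hHdef, Finset.mem_filter]
      exact ⟨Multiset.mem_toFinset.mpr hx, hxn⟩
    have hKicc : ∀ x : ℕ, H ∪ M.erase x ⊆ Finset.Icc 1 n := fun x =>
      Finset.union_subset hHicc ((Finset.erase_subset x M).trans hMIcc)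
    -- no augmentation of H by all-but-one of M is a face
    have hKnot : ∀ x ∈ M, H ∪ M.erase x ∉ Γ := by
      intro x hxM hKΓ
      have hxm : x ∈ mlast := (hMmem x).mp hxM
      have hKI : ((H ∪ M.erase x).val : Multiset ℕ) ∈ I := by
        rcases lt_trichotomy x a with hxa | hxa | hxa
        · have hxw : x ∈ w := hpw x (hsmall x (Multiset.mem_of_le hule hxm) (hxa.trans hab))
          have hxH : x ∈ H := hwH x hxw (hubm x hxm)
          have hsubm : mlast ≤ (H ∪ M.erase x).val := by
            rw [Multiset.le_iff_subset hnodup]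
            intro y hy
            rw [Finset.mem_val, Finset.mem_union]
            by_cases hyx : y = x
            · exact Or.inl (hyx ▸ hxH)
            · exact Or.inr (Finset.mem_erase.mpr ⟨hyx, (hMmem y).mpr hy⟩)
          exact hIdeal mlast hmI _ hsubm
        · exact absurd (hxa ▸ hxm) hanm
        · have hvI : (a ::ₘ mlast.erase x) ∈ I := hstab mlast hmm a x hposa hxa hxm hanm
          obtain ⟨g, hgmin, hgle⟩ := exists_minGen_le hvI
          have hvnd : (a ::ₘ mlast.erase x).Nodup := by
            rw [Multiset.nodup_cons]
            exact ⟨fun h => hanm (Multiset.mem_of_mem_erase h), hnodup.erase x⟩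
          have hvle : (a ::ₘ mlast.erase x) ≤ (H ∪ M.erase x).val := by
            rw [Multiset.le_iff_subset hvnd]
            intro y hy
            rw [Finset.mem_val, Finset.mem_union]
            rcases Multiset.mem_cons.mp hy with hya | hy'
            · exact Or.inl (hya ▸ hwH a haw (le_of_lt (hxa.trans_le (hubm x hxm))))
            · rcases (hnodup.mem_erase_iff).mp hy' with ⟨hyx, hym⟩
              exact Or.inr (Finset.mem_erase.mpr ⟨hyx, (hMmem y).mpr hym⟩)
          exact hIdeal g hgmin.1 _ (hgle.trans hvle)
      exact (hΓL _ (hKicc x)).mp hKΓ hKI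
    -- a facet containing at most card M - 2 elements of M
    have hFstar : ∃ Fs ∈ facets Γ, ∀ x ∈ M, ¬ M.erase x ⊆ Fs := by
      by_contra hcon
      push_neg at hcon
      obtain ⟨F, hFfac, hHF⟩ := exists_facet_superset hHΓ
      obtain ⟨x, hxM, hMF⟩ := hcon F hFfac
      exact hKnot x hxM (hdown F (hfacΓ F hFfac) _ (Finset.union_subset hHF hMF))
    obtain ⟨Fs, hFsfac, hFsav⟩ := hFstar
    -- for each x ∈ M a facet containing M.erase x but not x
    have hFx : ∀ x : ℕ, ∃ Fx : Finset ℕ, x ∈ M → (Fx ∈ facets Γ ∧ M.erase x ⊆ Fx ∧ x ∉ Fx) := by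
      intro x
      by_cases hxM : x ∈ M
      · have hxm : x ∈ mlast := (hMmem x).mp hxM
        have herΓ : M.erase x ∈ Γ := by
          rw [hΓL _ ((Finset.erase_subset x M).trans hMIcc)]
          intro hin
          have hval : (M.erase x).val = mlast.erase x := by
            rw [Finset.erase_val, hMval]
          rw [hval] at hin
          have heq := hmm.2 _ hin (Multiset.erase_le x mlast)
          exact absurd heq (ne_of_lt (Multiset.erase_lt.mpr hxm))
        obtain ⟨Fx, hFxfac, hFxsub⟩ := exists_facet_superset herΓ
        refine ⟨Fx, fun _ => ⟨hFxfac, hFxsub, fun hxF => ?_⟩⟩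
        have hFxΓ : Fx ∈ Γ := hfacΓ _ hFxfac
        have hsubm : mlast ≤ Fx.val := by
          rw [Multiset.le_iff_subset hnodup]
          intro y hy
          rw [Finset.mem_val]
          by_cases hyx : y = x
          · exact hyx ▸ hxF
          · exact hFxsub (Finset.mem_erase.mpr ⟨hyx, (hMmem y).mpr hy⟩)
        exact (hΓL _ (hΓV _ hFxΓ)).mp hFxΓ (hIdeal mlast hmI _ hsubm)
      · exact ⟨∅, fun h => absurd h hxM⟩
    choose f hf using hFx
    have hsubfac : insert Fs (M.image f) ⊆ facets Γ := by
      intro F hF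
      rcases Finset.mem_insert.mp hF with hFeq | hF
      · exact hFeq ▸ hFsfac
      · obtain ⟨x, hxM, hfx⟩ := Finset.mem_image.mp hF
        exact hfx ▸ (hf x hxM).1
    have hnotin : Fs ∉ M.image f := by
      intro hin
      obtain ⟨x, hxM, hfx⟩ := Finset.mem_image.mp hin
      exact hFsav x hxM (hfx ▸ (hf x hxM).2.1)
    have hinj : Set.InjOn f ↑M := by
      intro x hx y hy hxy
      by_contra hne
      have hxM := Finset.mem_coe.mp hx
      have hyM := Finset.mem_coe.mp hy
      have hyex : y ∈ M.erase x := Finset.mem_erase.mpr ⟨fun h => hne h.symm, hyM⟩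
      have hyfx : y ∈ f x := (hf x hxM).2.1 hyex
      rw [hxy] at hyfx
      exact (hf y hyM).2.2 hyfx
    have h1 : (insert Fs (M.image f)).card = M.card + 1 := by
      rw [Finset.card_insert_of_notMem hnotin, Finset.card_image_of_injOn hinj]
    have h2 := Finset.card_le_card hsubfac
    rw [h1, Multiset.toFinset_card_of_nodup hnodup] at h2
    omega
end

section
/- Given a fixed integer sequence B = {B_j}, for every d ≥ 0 the collection of truncated minimal generating sets G(J)_{≤d} = ∪_{j≤d} G(J)_j, as J ranges over all squarefree strongly stable monomial ideals of S finitely generated in each degree with B-sequence B, is finite. -/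
/-- The B-sequence of a squarefree strongly stable monomial ideal J, computed via the
squarefree Eliahou–Kervaire formula β_{i,i+j}(J) = Σ_{u ∈ G(J)_j} C(m(u) − j, i):
B_j(J) = Σ_{i=0}^j (−1)^i β_{i,j}(J). -/
noncomputable def sqB (J : Set (Multiset ℕ)) (j : ℕ) : ℤ :=
  ∑ i ∈ Finset.range (j + 1), (-1 : ℤ) ^ i *
    ∑ᶠ u ∈ {m ∈ minGen J | Multiset.card m = j - i},
      (((maxVar u - (j - i)).choose i : ℕ) : ℤ)

/-!
A minimal generator `u` of a squarefree strongly stable ideal with largest variable `x_M` yields,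
for each of the at least `M - deg u` indices `i < M` with `x_i ∤ u`, a minimal generator of degree
`≤ deg u` containing `x_i` and dividing `x_i u / x_M`; these are distinct, so `M` is bounded by
`deg u + #G(J)_{≤ deg u}`. In the formula for `B_{d+1}` the term with `i = 0` is `#G(J)_{d+1}`,
and every other term only involves generators of degree `≤ d`, which by induction are boundedly
many and use boundedly many variables. Hence `#G(J)_{≤ d}` is bounded, so all generators of
degree `≤ d` are squarefree monomials in a fixed finite set of variables.
-/

open Finset

lemma le_maxVar {u : Multiset ℕ} {x : ℕ} (hx : x ∈ u) : x ≤ maxVar u :=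
  Finset.le_sup (f := id) (Multiset.mem_toFinset.mpr hx)

lemma maxVar_mem {u : Multiset ℕ} (hu : u ≠ 0) : maxVar u ∈ u := by
  obtain ⟨a, ha, hsup⟩ := Finset.exists_mem_eq_sup u.toFinset
    (Multiset.toFinset_nonempty.mpr hu) id
  rw [maxVar, hsup]
  exact Multiset.mem_toFinset.mp ha

-- `G(J)_j` and `G(J)_{≤ d}`
def minGenDeg (J : Set (Multiset ℕ)) (j : ℕ) : Set (Multiset ℕ) :=
  {m ∈ minGen J | Multiset.card m = j}

def minGenUpTo (J : Set (Multiset ℕ)) (d : ℕ) : Set (Multiset ℕ) :=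
  {m ∈ minGen J | Multiset.card m ≤ d}

section MinimalGenerators

variable {J : Set (Multiset ℕ)}

lemma mem_minGen_iff_minimal {m : Multiset ℕ} : m ∈ minGen J ↔ Minimal (· ∈ J) m :=
  and_congr_right fun _ => forall₂_congr fun _ _ =>
    ⟨fun h hle => (h hle).ge, fun h hle => le_antisymm hle (h hle)⟩

lemma exists_minGen_le_s17 {m : Multiset ℕ} (hm : m ∈ J) : ∃ g ∈ minGen J, g ≤ m := by
  obtain ⟨g, hgm, hg⟩ := exists_minimal_le_of_wellFoundedLT (· ∈ J) m hm
  exact ⟨g, mem_minGen_iff_minimal.mpr hg, hgm⟩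

lemma minGenUpTo_mono {d e : ℕ} (h : d ≤ e) : minGenUpTo J d ⊆ minGenUpTo J e :=
  fun _ hm => ⟨hm.1, hm.2.trans h⟩

lemma minGenDeg_subset_minGenUpTo {j d : ℕ} (h : j ≤ d) : minGenDeg J j ⊆ minGenUpTo J d :=
  fun _ hm => ⟨hm.1, hm.2.trans_le h⟩

lemma minGenUpTo_succ (d : ℕ) : minGenUpTo J (d + 1) = minGenUpTo J d ∪ minGenDeg J (d + 1) := by
  ext m
  simp only [minGenUpTo, minGenDeg, Set.mem_union, Set.mem_ofPred_eq, Nat.le_succ_iff, and_or_left]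

lemma finite_minGenUpTo (hfin : ∀ j, (minGenDeg J j).Finite) (d : ℕ) :
    (minGenUpTo J d).Finite := by
  induction d with
  | zero => simpa [minGenUpTo, minGenDeg] using hfin 0
  | succ d ih => rw [minGenUpTo_succ]; exact ih.union (hfin _)

/-- The generator cannot avoid `x_i`: it would then divide `u / x_M`, a proper divisor of `u`. -/
lemma exists_minGen_mem_le_exchange {u : Multiset ℕ} {i M : ℕ} (hu : u ∈ minGen J)
    (hM : M ∈ u) (hexch : i ::ₘ u.erase M ∈ J) :
    ∃ g ∈ minGenUpTo J (Multiset.card u), i ∈ g ∧ g ≤ i ::ₘ u.erase M := by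
  obtain ⟨g, hg, hle⟩ := exists_minGen_le_s17 hexch
  have hcard : Multiset.card (i ::ₘ u.erase M) = Multiset.card u := by
    rw [Multiset.card_cons, Multiset.card_erase_add_one hM]
  refine ⟨g, ⟨hg, hcard ▸ Multiset.card_le_card hle⟩, ?_, hle⟩
  by_contra hig
  have hg_erase : g ≤ u.erase M := (Multiset.le_cons_of_notMem hig).mp hle
  have hgu : g = u := hu.2 g hg.1 (hg_erase.trans (Multiset.erase_le M u))
  exact (Multiset.erase_lt.mpr hM).not_ge (hgu ▸ hg_erase)

lemma IsSqStable.maxVar_le (hJ : IsSqStable J) {u : Multiset ℕ} (hu : u ∈ minGen J)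
    (hfin : (minGenUpTo J (Multiset.card u)).Finite) :
    maxVar u ≤ Multiset.card u + (minGenUpTo J (Multiset.card u)).ncard := by
  classical
  rcases eq_or_ne u 0 with rfl | hne
  · simp [maxVar]
  set M := maxVar u
  have hM : M ∈ u := maxVar_mem hne
  set s := Icc 1 M \ u.toFinset
  have hexch : ∀ i ∈ (s : Set ℕ), ∃ g ∈ minGenUpTo J (Multiset.card u),
      i ∈ g ∧ g ≤ i ::ₘ u.erase M := by
    intro i hi
    simp only [s, coe_sdiff, Set.mem_sdiff, mem_coe, mem_Icc, Multiset.mem_toFinset] at hi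
    have hiM : i < M := lt_of_le_of_ne hi.1.2 (ne_of_mem_of_not_mem hM hi.2).symm
    exact exists_minGen_mem_le_exchange hu hM (hJ.2.2 u hu i M hi.1.1 hiM hM hi.2)
  choose! g hg hig hgle using hexch
  have hinj : Set.InjOn g s := by
    intro i hi i' hi' heq
    have hi'_mem : i' ∈ i ::ₘ u.erase M := Multiset.mem_of_le (hgle i hi) (heq ▸ hig i' hi')
    rcases Multiset.mem_cons.mp hi'_mem with h | h
    · exact h.symm
    · simp only [s, coe_sdiff, Set.mem_sdiff, mem_coe, Multiset.mem_toFinset] at hi'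
      exact absurd (Multiset.mem_of_mem_erase h) hi'.2
  calc M ≤ Multiset.card u + ((Icc 1 M).card - u.toFinset.card) := by
        have := Multiset.toFinset_card_le u
        simp only [Nat.card_Icc]
        omega
    _ ≤ Multiset.card u + (s : Set ℕ).ncard := by
        rw [Set.ncard_coe_finset]
        exact Nat.add_le_add_left (le_card_sdiff _ _) _
    _ ≤ Multiset.card u + (minGenUpTo J (Multiset.card u)).ncard :=
        Nat.add_le_add_left (Set.ncard_le_ncard_of_injOn g hg hinj hfin) _

lemma IsSqStable.maxVar_le_of_ncard_le (hJ : IsSqStable J)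
    (hfin : ∀ j, (minGenDeg J j).Finite) {d T : ℕ} (hT : (minGenUpTo J d).ncard ≤ T)
    {u : Multiset ℕ} (hu : u ∈ minGenUpTo J d) : maxVar u ≤ d + T := by
  have hle := hJ.maxVar_le hu.1 (finite_minGenUpTo hfin _)
  have hsub := Set.ncard_le_ncard (minGenUpTo_mono hu.2) (finite_minGenUpTo hfin d)
  have := hu.2
  omega

lemma IsSqStable.minGenUpTo_subset_powerset_range (hJ : IsSqStable J) {d K : ℕ}
    (hK : ∀ u ∈ minGenUpTo J d, maxVar u ≤ K) :
    minGenUpTo J d ⊆ ((range (K + 1)).powerset.image Finset.val : Finset (Multiset ℕ)) := by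
  intro u hu
  refine mem_coe.mpr (mem_image.mpr ⟨u.toFinset, mem_powerset.mpr fun x hx => ?_, ?_⟩)
  · exact mem_range_succ_iff.mpr ((le_maxVar (Multiset.mem_toFinset.mp hx)).trans (hK u hu))
  · exact Multiset.toFinset_val u ▸ Multiset.dedup_eq_self.mpr (hJ.2.1 u hu.1).1

end MinimalGenerators

lemma finsum_mem_le_ncard_mul {α : Type*} {s : Set α} (hs : s.Finite) {f : α → ℤ} {c : ℤ}
    (hf : ∀ a ∈ s, f a ≤ c) : ∑ᶠ a ∈ s, f a ≤ s.ncard * c := by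
  rw [finsum_mem_eq_finite_toFinset_sum _ hs, Set.ncard_eq_toFinset_card s hs, ← nsmul_eq_mul]
  exact sum_le_card_nsmul _ _ _ fun a ha => hf a (hs.mem_toFinset.mp ha)

lemma sqB_succ {J : Set (Multiset ℕ)} {d : ℕ} (hfin : (minGenDeg J (d + 1)).Finite) :
    sqB J (d + 1) = (minGenDeg J (d + 1)).ncard +
      ∑ i ∈ range (d + 1), (-1 : ℤ) ^ (i + 1) *
        ∑ᶠ u ∈ minGenDeg J (d - i), (((maxVar u - (d - i)).choose (i + 1) : ℕ) : ℤ) := by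
  rw [sqB, sum_range_succ', add_comm, ← finsum_one, Nat.cast_finsum_mem hfin]
  simp [minGenDeg]

section BSequence

variable {J : Set (Multiset ℕ)} {d T : ℕ}

lemma IsSqStable.abs_sqB_succ_sub_ncard_le (hJ : IsSqStable J)
    (hfin : ∀ j, (minGenDeg J j).Finite) (hT : (minGenUpTo J d).ncard ≤ T) :
    |sqB J (d + 1) - (minGenDeg J (d + 1)).ncard| ≤ (d + 1) * (T * 2 ^ (d + T)) := by
  rw [sqB_succ (hfin _), add_sub_cancel_left]
  have hterm : ∀ i ∈ range (d + 1), |(-1 : ℤ) ^ (i + 1) *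
      ∑ᶠ u ∈ minGenDeg J (d - i), (((maxVar u - (d - i)).choose (i + 1) : ℕ) : ℤ)| ≤
      T * 2 ^ (d + T) := by
    intro i _
    have hsub : minGenDeg J (d - i) ⊆ minGenUpTo J d := minGenDeg_subset_minGenUpTo (by omega)
    have hcard : ((minGenDeg J (d - i)).ncard : ℤ) ≤ T := by
      exact_mod_cast (Set.ncard_le_ncard hsub (finite_minGenUpTo hfin d)).trans hT
    rw [abs_mul, abs_pow, abs_neg, abs_one, one_pow, one_mul,
      abs_of_nonneg (finsum_nonneg fun _ => finsum_nonneg fun _ => by positivity)]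
    calc _ ≤ (minGenDeg J (d - i)).ncard * (2 : ℤ) ^ (d + T) := by
          refine finsum_mem_le_ncard_mul (hfin _) fun u hu => ?_
          have hmax := hJ.maxVar_le_of_ncard_le hfin hT (hsub hu)
          exact_mod_cast (Nat.choose_le_two_pow _ _).trans (Nat.pow_le_pow_right two_pos (by omega))
      _ ≤ T * 2 ^ (d + T) := by gcongr
  calc _ ≤ ∑ i ∈ range (d + 1), |(-1 : ℤ) ^ (i + 1) *
          ∑ᶠ u ∈ minGenDeg J (d - i), (((maxVar u - (d - i)).choose (i + 1) : ℕ) : ℤ)| :=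
        abs_sum_le_sum_abs _ _
    _ ≤ _ := by simpa using sum_le_card_nsmul _ _ _ hterm

end BSequence

theorem exists_ncard_minGenUpTo_le (B : ℕ → ℤ) (d : ℕ) : ∃ T : ℕ, ∀ J : Set (Multiset ℕ),
    IsSqStable J → (∀ j, (minGenDeg J j).Finite) → (∀ j, sqB J j = B j) →
    (minGenUpTo J d).ncard ≤ T := by
  induction d with
  | zero =>
    refine ⟨1, fun J _ _ _ => ?_⟩
    have h0 : minGenUpTo J 0 ⊆ {0} := fun u hu => Multiset.card_eq_zero.mp (Nat.le_zero.mp hu.2)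
    simpa using Set.ncard_le_ncard h0
  | succ d ih =>
    obtain ⟨T, hT⟩ := ih
    refine ⟨T + ((B (d + 1)).natAbs + (d + 1) * (T * 2 ^ (d + T))), fun J hJ hfin hB => ?_⟩
    have hle := hT J hJ hfin hB
    have htop : ((minGenDeg J (d + 1)).ncard : ℤ) ≤ |B (d + 1)| + (d + 1) * (T * 2 ^ (d + T)) := by
      have := hJ.abs_sqB_succ_sub_ncard_le hfin hle
      rw [hB] at this
      linarith [le_abs_self (B (d + 1)), neg_abs_le (B (d + 1) - (minGenDeg J (d + 1)).ncard)]
    rw [Int.abs_eq_natAbs] at htop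
    calc (minGenUpTo J (d + 1)).ncard
        ≤ (minGenUpTo J d).ncard + (minGenDeg J (d + 1)).ncard := by
          rw [minGenUpTo_succ]; exact Set.ncard_union_le _ _
      _ ≤ _ := by gcongr; exact_mod_cast htop

/-- for a fixed integer sequence B and every d, the collection of truncated
minimal generating sets G(J)_{≤ d}, as J ranges over all squarefree strongly stable
monomial ideals of S finitely generated in each degree with B-sequence B, is finite. -/
theorem truncated_generators_finite (B : ℕ → ℤ) (d : ℕ) :
    {G : Set (Multiset ℕ) | ∃ J : Set (Multiset ℕ),
      IsSqStable J ∧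
      (∀ j : ℕ, {m ∈ minGen J | Multiset.card m = j}.Finite) ∧
      (∀ j : ℕ, sqB J j = B j) ∧
      G = {m ∈ minGen J | Multiset.card m ≤ d}}.Finite := by
  obtain ⟨T, hT⟩ := exists_ncard_minGenUpTo_le B d
  refine ((range (d + T + 1)).powerset.image Finset.val).finite_toSet.finite_subsets.subset ?_
  rintro G ⟨J, hJ, hfin, hB, rfl⟩
  exact hJ.minGenUpTo_subset_powerset_range fun u hu =>
    hJ.maxVar_le_of_ncard_le hfin (hT J hJ hfin hB) hu
end
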